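/- arXiv:1508.00938 — 2 statements merged into one kernel-verified Lean document; each statement's English description precedes it below -/
import Mathlib

section
/- Hoeffding step in the proof of Lemma 2: Let b be a positive integer and let q be a real number with 0 < q < 1 and b·q ≥ 1. Then b·q·(1−q)^{b−1} + (1−q)^b ≤ exp(−2(b·q − 1)²/b). (The left-hand side is the probability that among b independent Bernoulli trials, each failing with probability 1−q, at least b−1 trials fail.) -/
/-!
Chernoff's bound for `S ~ Bin(b, q)`: for every `l ≥ 0`,
`P(S ≤ 1) ≤ e^l · E[e^{-l S}] = e^l (q e^{-l} + 1 - q)^b`, and Hoeffding's lemma bounds the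
Bernoulli moment generating function by `q e^{-l} + 1 - q ≤ exp(-q l + l²/8)`.
The choice `l = 4(bq - 1)/b` minimises the resulting exponent `l - b q l + b l²/8`,
which becomes `-2(bq - 1)²/b`.
-/

open Real MeasureTheory ProbabilityTheory

lemma bernoulli_mgf_le_exp {q : ℝ} (hq0 : 0 ≤ q) (hq1 : q ≤ 1) (t : ℝ) :
    q * exp t + (1 - q) ≤ exp (q * t + t ^ 2 / 8) := by
  set μ : Measure ℝ := Ber(1, 0, ⟨q, hq0, hq1⟩)
  have hsupp : ∀ᵐ ω ∂μ, ω ∈ Set.Icc (0 : ℝ) 1 :=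
    ae_iff.2 <| bernoulliMeasure_apply_of_notMem_of_notMem _ measurableSet_Icc.compl
      (by simp) (by simp)
  have hoeffding := (hasSubgaussianMGF_of_mem_Icc aemeasurable_id hsupp).mgf_le t
  norm_num [mgf, μ, integral_bernoulliMeasure] at hoeffding
  have h1 : exp (q * t) * exp (t * (1 - q)) = exp t := by rw [← exp_add]; ring_nf
  have h0 : exp (q * t) * exp (-(t * q)) = 1 := by rw [← exp_add, ← exp_zero]; ring_nf
  calc q * exp t + (1 - q)
      = exp (q * t) * (q * exp (t * (1 - q)) + (1 - q) * exp (-(t * q))) := by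
        linear_combination -q * h1 - (1 - q) * h0
    _ ≤ exp (q * t) * exp (1 / 4 * t ^ 2 / 2) := by gcongr
    _ = exp (q * t + t ^ 2 / 8) := by rw [← exp_add]; ring_nf

lemma pow_add_mul_mul_pow_le_add_pow {R : Type*} [CommSemiring R] [PartialOrder R]
    [IsOrderedRing R] {x y : R} (hx : 0 ≤ x) (hy : 0 ≤ y) (n : ℕ) :
    y ^ n + n * x * y ^ (n - 1) ≤ (x + y) ^ n := by
  rcases n with _ | n
  · simp
  rw [add_pow, Finset.sum_range_succ', Finset.sum_range_succ']
  simp only [pow_zero, one_mul, Nat.choose_zero_right, Nat.cast_one, mul_one, zero_add, pow_one,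
    Nat.choose_one_right, Nat.sub_zero, Nat.add_sub_cancel]
  have hrest : 0 ≤ ∑ k ∈ Finset.range n,
      x ^ (k + 2) * y ^ (n + 1 - (k + 2)) * ((n + 1).choose (k + 2) : R) :=
    Finset.sum_nonneg fun _ _ ↦ by positivity
  calc y ^ (n + 1) + ((n + 1 : ℕ) : R) * x * y ^ n
      = 0 + x * y ^ n * ((n + 1 : ℕ) : R) + y ^ (n + 1) := by ring
    _ ≤ _ := by gcongr

lemma binomial_cdf_one_le_exp {q l : ℝ} (hq0 : 0 ≤ q) (hq1 : q ≤ 1) (hl : 0 ≤ l) (b : ℕ) :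
    b * q * (1 - q) ^ (b - 1) + (1 - q) ^ b ≤ exp (l - b * q * l + b * l ^ 2 / 8) := by
  have hcancel : exp l * (q * exp (-l)) = q := by
    rw [mul_left_comm, ← exp_add, add_neg_cancel, exp_zero, mul_one]
  have hy : (1 - q) ^ b ≤ exp l * (1 - q) ^ b :=
    le_mul_of_one_le_left (pow_nonneg (by linarith) b) (one_le_exp hl)
  have hmgf : q * exp (-l) + (1 - q) ≤ exp (-q * l + l ^ 2 / 8) :=
    (bernoulli_mgf_le_exp hq0 hq1 (-l)).trans_eq (by ring_nf)
  calc b * q * (1 - q) ^ (b - 1) + (1 - q) ^ b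
      ≤ exp l * ((1 - q) ^ b + b * (q * exp (-l)) * (1 - q) ^ (b - 1)) := by
        linear_combination hy - (b * (1 - q) ^ (b - 1)) * hcancel
    _ ≤ exp l * (q * exp (-l) + (1 - q)) ^ b := by
        gcongr
        exact pow_add_mul_mul_pow_le_add_pow (by positivity) (by linarith) b
    _ ≤ exp l * exp (-q * l + l ^ 2 / 8) ^ b := by gcongr
    _ = exp (l - b * q * l + b * l ^ 2 / 8) := by
        rw [← exp_nat_mul, ← exp_add]; ring_nf

/-- **Hoeffding step in the proof of Lemma 2.**
Let `b` be a positive integer and `q` a real number with `0 < q < 1` and `b·q ≥ 1`.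
Then `b·q·(1−q)^{b−1} + (1−q)^b ≤ exp(−2(b·q − 1)²/b)`.  (The left-hand side is the
probability that among `b` independent Bernoulli trials, each failing with probability
`1−q`, at least `b−1` trials fail.) -/
theorem hoeffding_step (b : ℕ) (hb : 0 < b) (q : ℝ) (hq0 : 0 < q) (hq1 : q < 1)
    (hbq : 1 ≤ (b : ℝ) * q) :
    (b : ℝ) * q * (1 - q) ^ (b - 1) + (1 - q) ^ b ≤
      Real.exp (-2 * ((b : ℝ) * q - 1) ^ 2 / b) := by
  have hb' : (0 : ℝ) < b := by exact_mod_cast hb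
  have hl : 0 ≤ 4 * ((b : ℝ) * q - 1) / b := div_nonneg (by linarith) hb'.le
  refine (binomial_cdf_one_le_exp hq0.le hq1.le hl b).trans_eq ?_
  congr 1
  field_simp
  ring
end

section
/- Transversality of the logical X and Z operators: let n be an odd positive integer and let U be the n-qubit encoding unitary. Then U†·(X ⊗ I^{⊗(n−1)})·U = X^{⊗n} and U·(X ⊗ I^{⊗(n−1)})·U† = X^{⊗n}, and likewise U†·(Z ⊗ I^{⊗(n−1)})·U = Z^{⊗n} and U·(Z ⊗ I^{⊗(n−1)})·U† = Z^{⊗n}. -/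
open Matrix

noncomputable section

/-- States of `n` qubits. -/
abbrev NState (n : ℕ) := Fin n → Fin 2

/-- Operators on `n` qubits. -/
abbrev NMat (n : ℕ) := Matrix (NState n) (NState n) ℂ

/-- The Pauli `X` matrix. -/
def Xmat : Matrix (Fin 2) (Fin 2) ℂ := !![0, 1; 1, 0]

/-- The Pauli `Z` matrix. -/
def Zmat : Matrix (Fin 2) (Fin 2) ℂ := !![1, 0; 0, -1]

/-- The CNOT gate on `n` qubits with control qubit `c` and target qubit `t`:
the permutation matrix mapping the basis state `f` to `f` updated at `t` to
`f t + f c` (mod 2). -/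
def nCNOT {n : ℕ} (c t : Fin n) : NMat n :=
  fun g f => if g = Function.update f t (f t + f c) then 1 else 0

/-- The `n`-qubit encoding unitary
`U = (C_{1→2}·C_{1→3} ⋯ C_{1→n})·(C_{2→1}·C_{3→1} ⋯ C_{n→1})` (qubits 1-indexed). -/
def encU (n : ℕ) (hn : 0 < n) : NMat n :=
  (((List.finRange n).map fun j =>
      if j = ⟨0, hn⟩ then 1 else nCNOT ⟨0, hn⟩ j).prod) *
  (((List.finRange n).map fun j =>
      if j = ⟨0, hn⟩ then 1 else nCNOT j ⟨0, hn⟩).prod)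

/-- `G ⊗ I^{⊗(n−1)}`: the single-qubit gate `G` acting on qubit 1, tensored with the
identity on qubits `2,…,n`. -/
def onFirst {n : ℕ} (hn : 0 < n) (G : Matrix (Fin 2) (Fin 2) ℂ) : NMat n :=
  fun g f => G (g ⟨0, hn⟩) (f ⟨0, hn⟩) *
    (if ∀ j : Fin n, j ≠ ⟨0, hn⟩ → g j = f j then 1 else 0)

/-- `G^{⊗n}`: the `n`-fold Kronecker power of the single-qubit gate `G`. -/
def kronPow {n : ℕ} (G : Matrix (Fin 2) (Fin 2) ℂ) : NMat n :=
  fun g f => ∏ j : Fin n, G (g j) (f j)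

/-! On a basis state `f : Fin n → Fin 2` the gates `C_{j→1}` first write the parity
`s = f₁ + ⋯ + fₙ` onto qubit 1, and the gates `C_{1→j}` then add it to every other qubit, so `U` is
the permutation matrix of `σ f = (s, f₂ + s, …, fₙ + s)`. For odd `n` the parity of `σ f` is `f₁`;
hence `σ` is injective, flipping every bit of `f` flips only the first bit of `σ f`, flipping the
first bit of `f` flips every bit of `σ f`, and the first bit of `σ f` (resp. of `f`) is the parity
of `f` (resp. of `σ f`). These are the relations `X₁ U = U X^{⊗n}`, `U X₁ = X^{⊗n} U`,
`Z₁ U = U Z^{⊗n}` and `U Z₁ = Z^{⊗n} U`, and `U` is unitary. -/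

open Function

theorem star_mul_mul_eq_of_mul_eq {R : Type*} [Monoid R] [StarMul R] {U A B : R}
    (hU : U ∈ unitary R) (h : A * U = U * B) : star U * A * U = B := by
  rw [mul_assoc, h, ← mul_assoc, Unitary.star_mul_self_of_mem hU, one_mul]

theorem mul_mul_star_eq_of_mul_eq {R : Type*} [Monoid R] [StarMul R] {U A B : R}
    (hU : U ∈ unitary R) (h : U * A = B * U) : U * A * star U = B := by
  rw [h, mul_assoc, Unitary.mul_star_self_of_mem hU, mul_one]

theorem AddChar.map_sum_eq_prod {ι A M : Type*} [AddCommMonoid A] [CommMonoid M]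
    (ψ : AddChar A M) (s : Finset ι) (f : ι → A) :
    ψ (∑ i ∈ s, f i) = ∏ i ∈ s, ψ (f i) := by
  induction s using Finset.cons_induction with
  | empty => simp
  | cons i s hi ih => rw [Finset.sum_cons, Finset.prod_cons, AddChar.map_add_eq_mul, ih]

section FunMatrix

variable {α ι R : Type*} [DecidableEq α]

def funMatrix [Zero R] [One R] (σ : α → α) : Matrix α α R :=
  Matrix.of fun g f => if g = σ f then 1 else 0

@[simp]
theorem funMatrix_apply [Zero R] [One R] (σ : α → α) (g f : α) :
    (funMatrix σ : Matrix α α R) g f = if g = σ f then 1 else 0 :=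
  rfl

theorem funMatrix_id [Zero R] [One R] : (funMatrix id : Matrix α α R) = 1 := by
  ext g f
  simp [Matrix.one_apply]

variable [Fintype α] [NonAssocSemiring R]

theorem mul_funMatrix (M : Matrix α α R) (σ : α → α) :
    M * funMatrix σ = Matrix.of fun g f => M g (σ f) := by
  ext g f
  simp [Matrix.mul_apply]

theorem funMatrix_mul_funMatrix (σ τ : α → α) :
    (funMatrix σ * funMatrix τ : Matrix α α R) = funMatrix (σ ∘ τ) := by
  rw [mul_funMatrix]
  rfl

theorem diagonal_mul_funMatrix (d : α → R) (σ : α → α) :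
    Matrix.diagonal d * funMatrix σ = funMatrix σ * Matrix.diagonal (d ∘ σ) := by
  ext g f
  by_cases h : g = σ f <;> simp [Matrix.mul_apply, Matrix.diagonal_apply, h]

theorem funMatrix_mem_unitaryGroup {R : Type*} [CommRing R] [StarRing R] {σ : α → α}
    (hσ : Injective σ) : (funMatrix σ : Matrix α α R) ∈ Matrix.unitaryGroup α R := by
  rw [Matrix.mem_unitaryGroup_iff']
  ext g h
  simp [Matrix.mul_apply, Matrix.one_apply, hσ.eq_iff, eq_comm, apply_ite star]

theorem prod_map_funMatrix_add {M : Type*} [AddCommMonoid M] [Fintype M] [DecidableEq M]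
    (l : List ι) (v : ι → M →+ M) (hv : ∀ i ∈ l, ∀ j ∈ l, ∀ x, v j (v i x) = 0) :
    (l.map fun i => (funMatrix (fun x => x + v i x) : Matrix M M R)).prod =
      funMatrix fun x => x + (l.map fun i => v i x).sum := by
  induction l with
  | nil =>
    simp only [List.map_nil, List.prod_nil, List.sum_nil, add_zero]
    exact funMatrix_id.symm
  | cons i l ih =>
    rw [List.map_cons, List.prod_cons, ih fun a ha b hb => hv a (.tail _ ha) b (.tail _ hb),
      funMatrix_mul_funMatrix]
    congr 1
    funext x
    have hvanish : v i (l.map fun j => v j x).sum = 0 := by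
      rw [map_list_sum, List.map_map]
      exact List.sum_eq_zero fun y hy => by
        obtain ⟨j, hj, rfl⟩ := List.mem_map.mp hy
        exact hv j (.tail _ hj) i List.mem_cons_self x
    simp only [Function.comp_apply, map_add, hvanish, List.map_cons, List.sum_cons]
    abel

end FunMatrix

theorem Xmat_eq_funMatrix : Xmat = funMatrix (· + 1) := by
  ext a b
  fin_cases a <;> fin_cases b <;> simp [Xmat]

def paritySign : AddChar (Fin 2) ℂ where
  toFun := ![1, -1]
  map_zero_eq_one' := rfl
  map_add_eq_mul' a b := by fin_cases a <;> fin_cases b <;> simp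

theorem Zmat_eq_diagonal : Zmat = Matrix.diagonal paritySign := by
  ext a b
  fin_cases a <;> fin_cases b <;> simp [Zmat]
  rfl

theorem fin_two_add_self (a : Fin 2) : a + a = 0 := by
  revert a
  decide

theorem odd_nsmul_fin_two {n : ℕ} (hodd : Odd n) (a : Fin 2) : n • a = a := by
  obtain ⟨m, rfl⟩ := hodd
  rw [add_nsmul, mul_nsmul, two_nsmul, fin_two_add_self, nsmul_zero, zero_add, one_nsmul]

section Qubits

variable {n : ℕ}

theorem onFirst_funMatrix (hn : 0 < n) (φ : Fin 2 → Fin 2) :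
    (onFirst hn (funMatrix φ) : NMat n) =
      funMatrix fun f => update f ⟨0, hn⟩ (φ (f ⟨0, hn⟩)) := by
  ext g f
  simp only [onFirst, funMatrix_apply, eq_update_iff, mul_ite, mul_one, mul_zero, ← ite_and,
    and_comm]

theorem onFirst_diagonal (hn : 0 < n) (d : Fin 2 → ℂ) :
    (onFirst hn (Matrix.diagonal d) : NMat n) = Matrix.diagonal fun f => d (f ⟨0, hn⟩) := by
  ext g f
  have hgf : g = f ↔ g ⟨0, hn⟩ = f ⟨0, hn⟩ ∧ ∀ j ≠ ⟨0, hn⟩, g j = f j := by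
    rw [← eq_update_iff, update_eq_self]
  simp only [onFirst, Matrix.diagonal_apply, hgf, mul_ite, mul_one, mul_zero, ← ite_and, and_comm]

theorem kronPow_funMatrix (φ : Fin 2 → Fin 2) :
    (kronPow (funMatrix φ) : NMat n) = funMatrix fun f => φ ∘ f := by
  ext g f
  simp [kronPow, Finset.prod_boole, funext_iff]

theorem kronPow_diagonal (d : Fin 2 → ℂ) :
    (kronPow (Matrix.diagonal d) : NMat n) = Matrix.diagonal fun f => ∏ j, d (f j) := by
  ext g f
  simp [kronPow, Matrix.diagonal_apply, Fintype.prod_ite_zero, funext_iff]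

theorem onFirst_Xmat (hn : 0 < n) :
    (onFirst hn Xmat : NMat n) = funMatrix (· + Pi.single ⟨0, hn⟩ 1) := by
  rw [Xmat_eq_funMatrix, onFirst_funMatrix]
  congr 1
  funext f k
  by_cases hk : k = ⟨0, hn⟩ <;> simp [hk]

theorem kronPow_Xmat : (kronPow Xmat : NMat n) = funMatrix (· + 1) := by
  rw [Xmat_eq_funMatrix, kronPow_funMatrix]
  rfl

theorem onFirst_Zmat (hn : 0 < n) :
    (onFirst hn Zmat : NMat n) = Matrix.diagonal fun f => paritySign (f ⟨0, hn⟩) := by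
  rw [Zmat_eq_diagonal, onFirst_diagonal]

theorem kronPow_Zmat :
    (kronPow Zmat : NMat n) = Matrix.diagonal fun f => paritySign (∑ j, f j) := by
  simp only [Zmat_eq_diagonal, kronPow_diagonal, AddChar.map_sum_eq_prod]

def cnotShift (c t : Fin n) : NState n →+ NState n :=
  (AddMonoidHom.single _ t).comp (Pi.evalAddMonoidHom _ c)

theorem cnotShift_apply (c t : Fin n) (f : NState n) : cnotShift c t f = Pi.single t (f c) :=
  rfl

theorem cnotShift_cnotShift {c t c' : Fin n} (h : c' ≠ t) (t' : Fin n) (f : NState n) :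
    cnotShift c' t' (cnotShift c t f) = 0 := by
  simp [cnotShift_apply, h]

theorem ite_one_nCNOT (p : Prop) [Decidable p] (c t : Fin n) :
    (if p then 1 else nCNOT c t) = funMatrix fun f => f + (if p then 0 else cnotShift c t) f := by
  by_cases hp : p
  · simp only [hp, if_true, AddMonoidHom.zero_apply, add_zero]
    exact funMatrix_id.symm
  · ext g f
    have hupdate : update f t (f t + f c) = f + cnotShift c t f := by
      funext k
      by_cases hk : k = t <;> simp [cnotShift_apply, hk]
    simp [hp, nCNOT, hupdate]

theorem ite_zero_cnotShift_apply (p : Prop) [Decidable p] (c t : Fin n) (f : NState n) :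
    (if p then 0 else cnotShift c t) f = Pi.single t (if p then 0 else f c) := by
  split_ifs <;> simp [cnotShift_apply]

theorem prod_nCNOT_from (z : Fin n) :
    ((List.finRange n).map fun j => if j = z then 1 else nCNOT z j).prod =
      funMatrix fun f => f + ∑ j, Pi.single j (if j = z then 0 else f z) := by
  simp only [ite_one_nCNOT]
  rw [prod_map_funMatrix_add]
  · simp only [ite_zero_cnotShift_apply, Fin.sum_univ_def]
  · intro i _ j _ f
    by_cases hi : i = z
    · simp [hi]
    · split_ifs <;> simp [cnotShift_cnotShift (Ne.symm hi)]

theorem prod_nCNOT_to (z : Fin n) :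
    ((List.finRange n).map fun j => if j = z then 1 else nCNOT j z).prod =
      funMatrix fun f => f + ∑ j, Pi.single z (if j = z then 0 else f j) := by
  simp only [ite_one_nCNOT]
  rw [prod_map_funMatrix_add]
  · simp only [ite_zero_cnotShift_apply, Fin.sum_univ_def]
  · intro i _ j _ f
    by_cases hj : j = z
    · simp [hj]
    · split_ifs <;> simp [cnotShift_cnotShift hj]

def encPerm (z : Fin n) (f : NState n) : NState n :=
  fun k => if k = z then ∑ j, f j else f k + ∑ j, f j

theorem encU_eq_funMatrix (hn : 0 < n) : encU n hn = funMatrix (encPerm ⟨0, hn⟩) := by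
  rw [encU, prod_nCNOT_from, prod_nCNOT_to, funMatrix_mul_funMatrix]
  congr 1
  funext f k
  simp only [Function.comp_apply, Pi.add_apply, Finset.sum_apply]
  by_cases hk : k = ⟨0, hn⟩ <;>
    simp [hk, Pi.single_apply, Finset.sum_ite, Finset.filter_ne', encPerm]

theorem encPerm_apply_self (z : Fin n) (f : NState n) : encPerm z f z = ∑ j, f j :=
  if_pos rfl

theorem sum_encPerm (hodd : Odd n) (z : Fin n) (f : NState n) : ∑ k, encPerm z f k = f z := by
  have hterm (k : Fin n) : encPerm z f k = f k + ∑ j, f j + (Pi.single z (f z) : NState n) k := by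
    by_cases hk : k = z
    · subst hk
      simp only [encPerm, if_true, Pi.single_eq_same]
      rw [add_right_comm, fin_two_add_self, zero_add]
    · simp [encPerm, hk]
  simp only [hterm, Finset.sum_add_distrib, Finset.sum_const, Finset.card_univ, Fintype.card_fin,
    odd_nsmul_fin_two hodd, Finset.sum_pi_single', Finset.mem_univ, if_true]
  rw [fin_two_add_self, zero_add]

theorem encPerm_injective (hodd : Odd n) (z : Fin n) : Injective (encPerm z) := by
  intro f g h
  have hz : f z = g z := by rw [← sum_encPerm hodd z f, h, sum_encPerm hodd z g]
  have hsum : ∑ j, f j = ∑ j, g j := by simpa [encPerm] using congrFun h z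
  funext k
  by_cases hk : k = z
  · rw [hk, hz]
  · simpa [encPerm, hk, hsum] using congrFun h k

theorem encPerm_add_one (hodd : Odd n) (z : Fin n) (f : NState n) :
    encPerm z (f + 1) = encPerm z f + Pi.single z 1 := by
  have hsum : ∑ j, (f j + 1) = ∑ j, f j + 1 := by
    simp [Finset.sum_add_distrib, odd_nsmul_fin_two hodd]
  funext k
  by_cases hk : k = z
  · simp [encPerm, hk, hsum]
  · simp only [encPerm, hk, if_false, Pi.add_apply, Pi.one_apply, hsum, Pi.single_eq_of_ne hk,
      add_zero]
    rw [add_add_add_comm, fin_two_add_self, add_zero]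

theorem encPerm_add_single (z : Fin n) (f : NState n) :
    encPerm z (f + Pi.single z 1) = encPerm z f + 1 := by
  have hsum : ∑ j, (f j + (Pi.single z 1 : NState n) j) = ∑ j, f j + 1 := by
    simp [Finset.sum_add_distrib]
  funext k
  by_cases hk : k = z
  · simp [encPerm, hk, hsum]
  · simp [encPerm, hk, hsum, add_assoc]

end Qubits

/-- **Transversality of the logical X and Z operators.**
For odd positive `n` and the `n`-qubit encoding unitary `U`,
`U†·(X ⊗ I^{⊗(n−1)})·U = X^{⊗n}`, `U·(X ⊗ I^{⊗(n−1)})·U† = X^{⊗n}`, and likewise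
`U†·(Z ⊗ I^{⊗(n−1)})·U = Z^{⊗n}`, `U·(Z ⊗ I^{⊗(n−1)})·U† = Z^{⊗n}`. -/
theorem logical_XZ_transversal (n : ℕ) (hn : 0 < n) (hodd : Odd n) :
    (encU n hn)ᴴ * onFirst hn Xmat * encU n hn = kronPow Xmat ∧
      encU n hn * onFirst hn Xmat * (encU n hn)ᴴ = kronPow Xmat ∧
      (encU n hn)ᴴ * onFirst hn Zmat * encU n hn = kronPow Zmat ∧
      encU n hn * onFirst hn Zmat * (encU n hn)ᴴ = kronPow Zmat := by
  rw [onFirst_Xmat, kronPow_Xmat, onFirst_Zmat, kronPow_Zmat]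
  set z : Fin n := ⟨0, hn⟩
  have hU : encU n hn = funMatrix (encPerm z) := encU_eq_funMatrix hn
  have hUnit : encU n hn ∈ unitary (NMat n) :=
    hU ▸ funMatrix_mem_unitaryGroup (encPerm_injective hodd z)
  refine ⟨star_mul_mul_eq_of_mul_eq hUnit ?_, mul_mul_star_eq_of_mul_eq hUnit ?_,
    star_mul_mul_eq_of_mul_eq hUnit ?_, mul_mul_star_eq_of_mul_eq hUnit ?_⟩ <;>
    rw [hU]
  · simp only [funMatrix_mul_funMatrix, Function.comp_def, encPerm_add_one hodd]
  · simp only [funMatrix_mul_funMatrix, Function.comp_def, encPerm_add_single]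
  · simp only [diagonal_mul_funMatrix, Function.comp_def, encPerm_apply_self]
  · simp only [diagonal_mul_funMatrix, Function.comp_def, sum_encPerm hodd]
end
end
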